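/- For the symmetric matrix M* on FOUR, the truth-preserving entailment equals the falsity-(non-)preserving entailment: Γ ⊨ᵗ α iff Γ ⊨ᶠ α, where Γ ⊨ᵗ α means no valuation accepts all of Γ (value in {⊤, t}) while not accepting α, and Γ ⊨ᶠ α means no valuation not-rejects all of Γ (value in {⊥, t}) while rejecting α (value in {f, ⊤}). -/

import Mathlib

/-- The four truth-values of Dunn-Belnap logic. -/
inductive Four where
  | f | bot | top | t
deriving DecidableEq, Repr

namespace Four

/-- Whether the value contains the classical value T. -/
def hasT : Four → Bool
  | t => true | top => true | _ => false

/-- Whether the value contains the classical value F. -/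
def hasF : Four → Bool
  | f => true | top => true | _ => false

/-- Build a value from its T-part and F-part. -/
def mk : Bool → Bool → Four
  | true, true => top
  | true, false => t
  | false, true => f
  | false, false => bot

/-- Logical order: x ≤_t y iff x∩{T} ⊆ y∩{T} and y∩{F} ⊆ x∩{F}. -/
def leT (x y : Four) : Prop :=
  (x.hasT = true → y.hasT = true) ∧ (y.hasF = true → x.hasF = true)

/-- Information order: x ≤_i y iff x ⊆ y. -/
def leI (x y : Four) : Prop :=
  (x.hasT = true → y.hasT = true) ∧ (x.hasF = true → y.hasF = true)

/-- Negation: swaps T and F membership. -/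
def negT (x : Four) : Four := mk x.hasF x.hasT

/-- Infimum w.r.t. the logical order. -/
def meetT (x y : Four) : Four := mk (x.hasT && y.hasT) (x.hasF || y.hasF)

/-- Supremum w.r.t. the logical order. -/
def joinT (x y : Four) : Four := mk (x.hasT || y.hasT) (x.hasF && y.hasF)

/-- Infimum w.r.t. the information order. -/
def meetI (x y : Four) : Four := mk (x.hasT && y.hasT) (x.hasF && y.hasF)

/-- Supremum w.r.t. the information order. -/
def joinI (x y : Four) : Four := mk (x.hasT || y.hasT) (x.hasF || y.hasF)

/-- Acceptance: designated set Y = {⊤, t}. -/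
def acc (x : Four) : Prop := x = top ∨ x = t

/-- Rejection: set N = {f, ⊤}. -/
def rej (x : Four) : Prop := x = f ∨ x = top

end Four

/-- Formulas of the language S: propositional variables, ¬, ∧, ∨. -/
inductive Form where
  | var : ℕ → Form
  | neg : Form → Form
  | conj : Form → Form → Form
  | disj : Form → Form → Form
deriving DecidableEq

/-- A valuation (agent) is determined by its values on variables; it is
extended homomorphically to all formulas. -/
def Form.eval (v : ℕ → Four) : Form → Four
  | var n => v n
  | neg φ => (φ.eval v).negT
  | conj φ ψ => (φ.eval v).meetT (ψ.eval v)
  | disj φ ψ => (φ.eval v).joinT (ψ.eval v)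

open Four Form

/-- Truth-preserving (Tarskian) entailment ⊨ᵗ = ⊨⁴. -/
def entT (Γ : Set Form) (α : Form) : Prop :=
  ¬ ∃ v : ℕ → Four, (∀ γ ∈ Γ, acc (γ.eval v)) ∧ ¬ acc (α.eval v)

/-- Falsity entailment ⊨ᶠ: no valuation not-rejects all premises while rejecting the conclusion. -/
def entF (Γ : Set Form) (α : Form) : Prop :=
  ¬ ∃ v : ℕ → Four, (∀ γ ∈ Γ, ¬ rej (γ.eval v)) ∧ rej (α.eval v)

/-- q-entailment: no valuation not-rejects all premises while not-accepting the conclusion. -/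
def entQ (Γ : Set Form) (α : Form) : Prop :=
  ¬ ∃ v : ℕ → Four, (∀ γ ∈ Γ, ¬ rej (γ.eval v)) ∧ ¬ acc (α.eval v)

/-- p-entailment: no valuation accepts all premises while rejecting the conclusion. -/
def entP (Γ : Set Form) (α : Form) : Prop :=
  ¬ ∃ v : ℕ → Four, (∀ γ ∈ Γ, acc (γ.eval v)) ∧ rej (α.eval v)

/-- B-entailment (Γ | Ψ ⊨ Φ | Δ): no valuation accepts all of Γ,
not-accepts all of Δ, rejects all of Φ and not-rejects all of Ψ. -/
def Bent (Γ Ψ Φ Δ : Set Form) : Prop :=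
  ¬ ∃ v : ℕ → Four,
    (∀ γ ∈ Γ, acc (γ.eval v)) ∧ (∀ δ ∈ Δ, ¬ acc (δ.eval v)) ∧
    (∀ φ ∈ Φ, rej (φ.eval v)) ∧ (∀ ψ ∈ Ψ, ¬ rej (ψ.eval v))

/-!
Swapping `⊤` and `⊥` commutes with `¬`, `∧`, `∨`, so composing a valuation with the swap
evaluates every formula to the swapped value. The swap turns acceptance into non-rejection
and non-acceptance into rejection, and it is an involution on valuations, so counter-models
of `Γ ⊨ᵗ α` and of `Γ ⊨ᶠ α` correspond one to one.
-/

def Four.dual : Four → Four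
  | top => bot
  | bot => top
  | x => x

namespace Four

theorem dual_involutive : Function.Involutive dual := by
  intro x; cases x <;> rfl

theorem dual_negT (x : Four) : x.negT.dual = x.dual.negT := by
  cases x <;> rfl

theorem dual_meetT (x y : Four) : (x.meetT y).dual = x.dual.meetT y.dual := by
  cases x <;> cases y <;> rfl

theorem dual_joinT (x y : Four) : (x.joinT y).dual = x.dual.joinT y.dual := by
  cases x <;> cases y <;> rfl

theorem acc_dual_iff (x : Four) : acc x.dual ↔ ¬ rej x := by
  cases x <;> simp [dual, acc, rej]

end Four

theorem Form.eval_comp {h : Four → Four} (hneg : ∀ x, h x.negT = (h x).negT)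
    (hmeet : ∀ x y, h (x.meetT y) = (h x).meetT (h y))
    (hjoin : ∀ x y, h (x.joinT y) = (h x).joinT (h y)) (v : ℕ → Four) (φ : Form) :
    φ.eval (h ∘ v) = h (φ.eval v) := by
  induction φ with
  | var n => rfl
  | neg φ ih => simp only [Form.eval, ih, hneg]
  | conj φ ψ ihφ ihψ => simp only [Form.eval, ihφ, ihψ, hmeet]
  | disj φ ψ ihφ ihψ => simp only [Form.eval, ihφ, ihψ, hjoin]

theorem Form.eval_comp_dual (v : ℕ → Four) (φ : Form) : φ.eval (dual ∘ v) = (φ.eval v).dual :=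
  Form.eval_comp dual_negT dual_meetT dual_joinT v φ

/-- for the symmetric matrix, ⊨ᵗ coincides with ⊨ᶠ. -/
theorem entT_eq_entF : ∀ (Γ : Set Form) (α : Form), entT Γ α ↔ entF Γ α := by
  intro Γ α
  unfold entT entF
  rw [dual_involutive.surjective.comp_left.exists]
  simp only [Form.eval_comp_dual, acc_dual_iff, not_not]
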